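/- Let H be a Hopf algebra over a field k, let ∇ : H ⊗ H → H ⊗ H ⊗ H be ∇(h ⊗ g) = 1 ⊗ h ⊗ g − Σ h g₍₁₎ ⊗ S(g₍₂₎) ⊗ g₍₃₎, and let T := d − ∇ on Ω¹H, where d(Σ a ⊗ b) := Σ (1 ⊗ a ⊗ b − a ⊗ 1 ⊗ b + a ⊗ b ⊗ 1). Then for every ω ∈ Ω¹H one has T(ω) = Σ (a ⊗ b ⊗ 1 − a ⊗ 1 ⊗ b + a b₍₁₎ ⊗ S(b₍₂₎) ⊗ b₍₃₎) (for ω = Σ a ⊗ b), and T is a left H-module map: T(f·ω) = f·T(ω) for all f ∈ H and ω ∈ Ω¹H, where f acts by multiplication on the first tensor factor. -/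
import Mathlib


open TensorProduct

noncomputable section

variable {k H : Type*} [Field k] [Ring H] [HopfAlgebra k H]

/-- The second term of `∇`: `h ⊗ g ↦ Σ h g₍₁₎ ⊗ S(g₍₂₎) ⊗ g₍₃₎`. -/
noncomputable def nablaSecond : H ⊗[k] H →ₗ[k] H ⊗[k] (H ⊗[k] H) :=
  (LinearMap.mul' k H).rTensor (H ⊗[k] H)
    ∘ₗ (TensorProduct.assoc k H H (H ⊗[k] H)).symm.toLinearMap
    ∘ₗ LinearMap.lTensor H
        (((HopfAlgebra.antipode (R := k) (A := H)).rTensor H).lTensor H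
          ∘ₗ (Coalgebra.comul (R := k) (A := H)).lTensor H
          ∘ₗ Coalgebra.comul)

/-- `∇(h ⊗ g) = 1 ⊗ h ⊗ g − Σ h g₍₁₎ ⊗ S(g₍₂₎) ⊗ g₍₃₎`. -/
noncomputable def nabla : H ⊗[k] H →ₗ[k] H ⊗[k] (H ⊗[k] H) :=
  TensorProduct.mk k H (H ⊗[k] H) 1 - nablaSecond

/-- The exterior differential on universal 1-forms:
`d(a ⊗ b) = 1 ⊗ a ⊗ b − a ⊗ 1 ⊗ b + a ⊗ b ⊗ 1`. -/
noncomputable def dOne : H ⊗[k] H →ₗ[k] H ⊗[k] (H ⊗[k] H) :=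
  TensorProduct.mk k H (H ⊗[k] H) 1
    - LinearMap.lTensor H (TensorProduct.mk k H H 1)
    + LinearMap.lTensor H ((TensorProduct.mk k H H).flip 1)

/-- The torsion `T = d − ∇`. -/
noncomputable def torsion : H ⊗[k] H →ₗ[k] H ⊗[k] (H ⊗[k] H) :=
  dOne - nabla

lemma torsion_eq : torsion (k := k) (H := H)
    = LinearMap.lTensor H ((TensorProduct.mk k H H).flip 1)
        - LinearMap.lTensor H (TensorProduct.mk k H H 1) + nablaSecond := by
  unfold torsion dOne nabla; abel

lemma lT_comm (φ : H →ₗ[k] H ⊗[k] H) (f : H) (ω : H ⊗[k] H) :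
    LinearMap.lTensor H φ ((LinearMap.mulLeft k f).rTensor H ω)
      = (LinearMap.mulLeft k f).rTensor (H ⊗[k] H) (LinearMap.lTensor H φ ω) := by
  induction ω using TensorProduct.induction_on with
  | zero => simp
  | add x y hx hy => simp [map_add, hx, hy]
  | tmul a b => simp

set_option synthInstance.maxHeartbeats 1000000 in
set_option maxHeartbeats 1000000 in
lemma nablaSecond_comm (f : H) (ω : H ⊗[k] H) :
    nablaSecond ((LinearMap.mulLeft k f).rTensor H ω)
      = (LinearMap.mulLeft k f).rTensor (H ⊗[k] H) (nablaSecond ω) := by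
  induction ω using TensorProduct.induction_on with
  | zero => simp
  | add x y hx hy => simp [map_add, hx, hy]
  | tmul h g =>
    simp only [nablaSecond, LinearMap.comp_apply, LinearMap.rTensor_tmul,
      LinearMap.lTensor_tmul, LinearMap.mulLeft_apply]
    induction (((HopfAlgebra.antipode (R := k) (A := H)).rTensor H).lTensor H
          ((Coalgebra.comul (R := k) (A := H)).lTensor H
            (Coalgebra.comul g))) using TensorProduct.induction_on with
    | zero => simp [TensorProduct.tmul_zero]
    | add x y hx hy =>
      simp only [TensorProduct.tmul_add, map_add]
      rw [hx, hy]
    | tmul x y =>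
      simp [TensorProduct.assoc_symm_tmul, LinearMap.rTensor_tmul,
        LinearMap.mul'_apply, mul_assoc]

/-- on `Ω¹H = ker(m)` the torsion `T = d − ∇` is given by
`T(Σ a ⊗ b) = Σ (a ⊗ b ⊗ 1 − a ⊗ 1 ⊗ b + a b₍₁₎ ⊗ S(b₍₂₎) ⊗ b₍₃₎)`, and `T` is a left
`H`-module map: `T(f·ω) = f·T(ω)` with `f` acting by multiplication on the first tensor
factor. -/
theorem statement4 :
    (∀ ω ∈ LinearMap.ker (LinearMap.mul' k H),
      torsion (k := k) (H := H) ω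
        = LinearMap.lTensor H ((TensorProduct.mk k H H).flip 1) ω
            - LinearMap.lTensor H (TensorProduct.mk k H H 1) ω
          + nablaSecond ω)
    ∧ (∀ f : H, ∀ ω ∈ LinearMap.ker (LinearMap.mul' k H),
        torsion ((LinearMap.mulLeft k f).rTensor H ω)
          = (LinearMap.mulLeft k f).rTensor (H ⊗[k] H) (torsion ω)) := by
  constructor
  · intro ω _; rw [torsion_eq]; simp
  · intro f ω _
    rw [torsion_eq]
    simp only [LinearMap.add_apply, LinearMap.sub_apply, map_add, map_sub,
      lT_comm, nablaSecond_comm]
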